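/- Let X be a topological space, n a positive natural number, and σ : Δⁿ → X a singular simplex with ∂ₙσ = 0 in C_*(X; ℤ). Then there exists a bijection π : {0,2,...,n-1} → {1,3,...,n} such that σ ∘ i_j = σ ∘ i_{π(j)} for all j ∈ {0,2,...,n-1}. -/

import Mathlib

/-!
In `∂σ = Σ_j (-1)^j (σ ∘ i_j)` the coefficient of a simplex `τ` is the number of even `j` with
`σ ∘ i_j = τ` minus the number of odd such `j`. If `∂σ = 0` these counts agree for every `τ`,
so the even and odd face indices can be matched bijectively fibre by fibre of `j ↦ σ ∘ i_j`.
-/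

open Finsupp

noncomputable section

namespace SimplexCategory

/-- The old Mathlib `SimplexCategory.toTopObj` (removed upstream), restored verbatim in meaning. -/
def toTopObj (x : SimplexCategory) := { f : Fin (x.len + 1) → NNReal | ∑ i, f i = 1 }

instance (x : SimplexCategory) : CoeFun x.toTopObj fun _ => Fin (x.len + 1) → NNReal :=
  ⟨fun f => (f : Fin (x.len + 1) → NNReal)⟩

instance (x : SimplexCategory) : TopologicalSpace x.toTopObj :=
  inferInstanceAs (TopologicalSpace { f : Fin (x.len + 1) → NNReal | ∑ i, f i = 1 })

/-- The old Mathlib `SimplexCategory.toTopMap`. -/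
def toTopMap {x y : SimplexCategory} (f : x ⟶ y) (g : x.toTopObj) : y.toTopObj :=
  ⟨fun i => ∑ j ∈ Finset.univ.filter (f.toOrderHom · = i), g j, by
    simp only [toTopObj, Set.mem_setOf]
    rw [← Finset.sum_biUnion]
    · have hg : ∑ i : Fin (x.len + 1), g i = 1 := g.2
      convert hg
      simp [Finset.eq_univ_iff_forall]
    · apply Set.pairwiseDisjoint_filter⟩

theorem continuous_toTopMap {x y : SimplexCategory} (f : x ⟶ y) : Continuous (toTopMap f) := by
  refine Continuous.subtype_mk (continuous_pi fun i => ?_) _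
  exact continuous_finset_sum _ (fun j _ => (continuous_apply _).comp continuous_subtype_val)

end SimplexCategory

/-- The topological standard `n`-simplex. -/
abbrev TopSimplex (n : ℕ) : Type :=
  (SimplexCategory.mk n).toTopObj

/-- Singular `n`-simplices on `X`. -/
abbrev SingularSimplex (n : ℕ) (X : Type*) [TopologicalSpace X] : Type _ :=
  C(TopSimplex n, X)

/-- Singular `n`-chains on `X` with coefficients in `R`. -/
abbrev SC (R : Type*) [Ring R] (n : ℕ) (X : Type*) [TopologicalSpace X] : Type _ :=
  SingularSimplex n X →₀ R

/-- The inclusion of the `j`-th face of the standard `(n+1)`-simplex. -/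
def faceIncl (n : ℕ) (j : Fin (n + 2)) : C(TopSimplex n, TopSimplex (n + 1)) :=
  ⟨SimplexCategory.toTopMap (SimplexCategory.δ j), SimplexCategory.continuous_toTopMap _⟩

/-- The `j`-th face of a singular `(n+1)`-simplex. -/
def sface {n : ℕ} {X : Type*} [TopologicalSpace X] (j : Fin (n + 2))
    (σ : SingularSimplex (n + 1) X) : SingularSimplex n X :=
  σ.comp (faceIncl n j)

/-- The singular boundary operator. -/
def bdry (R : Type*) [Ring R] {n : ℕ} (X : Type*) [TopologicalSpace X] :
    SC R (n + 1) X →+ SC R n X :=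
  Finsupp.liftAddHom fun σ =>
    ∑ j : Fin (n + 2), (Finsupp.singleAddHom (sface j σ)).comp
      (AddMonoidHom.mulLeft ((-1 : R) ^ (j : ℕ)))

/-- The subgroup of singular cycles. -/
def cycles (R : Type*) [Ring R] : (n : ℕ) → (X : Type*) → [TopologicalSpace X] →
    AddSubgroup (SC R n X)
  | 0, _, _ => ⊤
  | (_ + 1), X, _ => (bdry R X).ker

/-- The subgroup of singular boundaries. -/
def bdries (R : Type*) [Ring R] (n : ℕ) (X : Type*) [TopologicalSpace X] :
    AddSubgroup (SC R n X) :=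
  (bdry R (n := n) X).range

/-- Singular homology of `X` in degree `n` with coefficients in `R`. -/
abbrev SH (R : Type*) [Ring R] (n : ℕ) (X : Type*) [TopologicalSpace X] : Type _ :=
  cycles R n X ⧸ ((bdries R n X).addSubgroupOf (cycles R n X))

/-- The homology class of a cycle. -/
def hcls {R : Type*} [Ring R] {n : ℕ} {X : Type*} [TopologicalSpace X]
    (c : SC R n X) (hc : c ∈ cycles R n X) : SH R n X :=
  QuotientAddGroup.mk ⟨c, hc⟩

lemma mem_cycles_of {R : Type*} [Ring R] {n : ℕ} {X : Type*} [TopologicalSpace X]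
    {c : SC R (n + 1) X} (hc : bdry R X c = 0) : c ∈ cycles R (n + 1) X :=
  hc

/-- The chain map induced by a continuous map. -/
def cmap (R : Type*) [Ring R] {n : ℕ} {X Y : Type*} [TopologicalSpace X] [TopologicalSpace Y]
    (f : C(X, Y)) : SC R n X →+ SC R n Y :=
  Finsupp.liftAddHom fun σ => Finsupp.singleAddHom (f.comp σ)

lemma sface_comp {n : ℕ} {X Y : Type*} [TopologicalSpace X] [TopologicalSpace Y]
    (f : C(X, Y)) (j : Fin (n + 2)) (σ : SingularSimplex (n + 1) X) :
    sface j (f.comp σ) = f.comp (sface j σ) := rfl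

lemma cmap_bdry (R : Type*) [Ring R] {n : ℕ} {X Y : Type*} [TopologicalSpace X]
    [TopologicalSpace Y] (f : C(X, Y)) (c : SC R (n + 1) X) :
    bdry R Y (cmap R f c) = cmap R f (bdry R X c) := by
  have : (bdry R Y).comp (cmap R (n := n + 1) f) = (cmap R f).comp (bdry R X) := by
    refine Finsupp.addHom_ext fun σ a => ?_
    simp only [AddMonoidHom.comp_apply, bdry, cmap, Finsupp.liftAddHom_apply_single,
      AddMonoidHom.finset_sum_apply, AddMonoidHom.coe_comp, Function.comp_apply,
      AddMonoidHom.coe_mulLeft, Finsupp.singleAddHom_apply, map_sum, sface_comp]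
  exact DFunLike.congr_fun this c

lemma cmap_mem_cycles {R : Type*} [Ring R] {n : ℕ} {X Y : Type*} [TopologicalSpace X]
    [TopologicalSpace Y] (f : C(X, Y)) {c : SC R n X} (hc : c ∈ cycles R n X) :
    cmap R f c ∈ cycles R n Y := by
  cases n with
  | zero => trivial
  | succ n =>
      have hc' : bdry R X c = 0 := hc
      show bdry R Y (cmap R f c) = 0
      rw [cmap_bdry, hc', map_zero]

/-- The map induced on homology by a continuous map. -/
def hmap (R : Type*) [Ring R] {n : ℕ} {X Y : Type*} [TopologicalSpace X] [TopologicalSpace Y]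
    (f : C(X, Y)) : SH R n X →+ SH R n Y :=
  QuotientAddGroup.map _ _
    (AddMonoidHom.codRestrict ((cmap R f).comp (cycles R n X).subtype) (cycles R n Y)
      fun c => cmap_mem_cycles f c.2)
    (by
      rintro ⟨c, hc⟩ hmem
      have hb : c ∈ bdries R n X := hmem
      obtain ⟨b, hb⟩ := hb
      show _ ∈ (bdries R n Y).addSubgroupOf _
      refine ⟨cmap R f b, ?_⟩
      simp only [AddMonoidHom.codRestrict_apply, AddMonoidHom.comp_apply,
        AddSubgroup.coe_subtype]
      rw [cmap_bdry, hb])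

/-- The `ℓ¹`-norm of an integral chain. -/
def norm1 {n : ℕ} {X : Type*} [TopologicalSpace X] (c : SC ℤ n X) : ℕ :=
  c.sum fun _ a => a.natAbs

/-- The integral `ℓ¹`-seminorm of an integral homology class. -/
def clnorm {n : ℕ} {X : Type*} [TopologicalSpace X] (α : SH ℤ n X) : ℕ :=
  sInf { m | ∃ c : cycles ℤ n X, (QuotientAddGroup.mk c : SH ℤ n X) = α ∧ norm1 c.1 = m }

/-- A fundamental class: a generator of the infinite cyclic top homology of an oriented
closed connected manifold. -/
structure FundClass (n : ℕ) (M : Type*) [TopologicalSpace M] where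
  cls : SH ℤ n M
  spans : ∀ x : SH ℤ n M, ∃ k : ℤ, x = k • cls
  torsionfree : ∀ k : ℤ, k • cls = 0 → k = 0

/-- The integral simplicial volume. -/
def isv (n : ℕ) (M : Type*) [TopologicalSpace M] (φ : FundClass n M) : ℕ :=
  clnorm φ.cls

/-- A matching on the faces of the standard `(n+1)`-simplex: a bijection from the
even-indexed faces onto the odd-indexed faces. -/
def IsMatching (n : ℕ) (π : Fin (n + 2) → Fin (n + 2)) : Prop :=
  Set.BijOn π { j | Even (j : ℕ) } { j | Odd (j : ℕ) }

/-- The gluing relation of the model space of a matching. -/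
def matchRel (n : ℕ) (π : Fin (n + 2) → Fin (n + 2)) (x y : TopSimplex (n + 1)) : Prop :=
  ∃ j : Fin (n + 2), Even (j : ℕ) ∧ ∃ t : TopSimplex n,
    x = faceIncl n j t ∧ y = faceIncl n (π j) t

/-- The model space `M_π` of a matching `π`. -/
abbrev ModelSpace (n : ℕ) (π : Fin (n + 2) → Fin (n + 2)) : Type :=
  Quot (matchRel n π)

/-- The canonical projection `σ_π : Δ^{n+1} → M_π`, a singular simplex on `M_π`. -/
def modelProj (n : ℕ) (π : Fin (n + 2) → Fin (n + 2)) :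
    SingularSimplex (n + 1) (ModelSpace n π) :=
  ⟨Quot.mk _, continuous_quot_mk⟩

/-- The unreduced suspension of a space. -/
abbrev Susp (Y : Type*) [TopologicalSpace Y] : Type _ :=
  Quot (fun a b : Y × (Set.Icc (-1 : ℝ) 1) =>
    ((a.2 : ℝ) = 1 ∧ (b.2 : ℝ) = 1) ∨ ((a.2 : ℝ) = -1 ∧ (b.2 : ℝ) = -1))

end

open Finset

section FiberMatching

variable {α β : Type*}

lemma Equiv.bijOn_extend_subtype {p q : α → Prop} [DecidablePred p]
    (e : {a // p a} ≃ {a // q a}) :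
    Set.BijOn (fun a => if h : p a then (e ⟨a, h⟩ : α) else a) {a | p a} {a | q a} := by
  refine ⟨fun a (ha : p a) => ?_, fun a (ha : p a) b (hb : p b) hab => ?_,
    fun b (hb : q b) => ?_⟩
  · simp only [dif_pos ha]
    exact (e ⟨a, ha⟩).2
  · simp only [dif_pos ha, dif_pos hb] at hab
    exact congrArg Subtype.val (e.injective (Subtype.ext hab))
  · exact ⟨e.symm ⟨b, hb⟩, (e.symm ⟨b, hb⟩).2, by simp [dif_pos (e.symm ⟨b, hb⟩).2]⟩

lemma exists_subtypeEquiv_comp_eq [Fintype α] [DecidableEq β] {p q : α → Prop}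
    [DecidablePred p] [DecidablePred q] (f : α → β)
    (hcard : ∀ b, #{a | p a ∧ f a = b} = #{a | q a ∧ f a = b}) :
    ∃ e : {a // p a} ≃ {a // q a}, ∀ a, f (e a) = f a := by
  have hfiber (b : β) : {x : {a // p a} // f x = b} ≃ {y : {a // q a} // f y = b} := by
    refine Fintype.equivOfCardEq ?_
    rw [Fintype.card_congr (Equiv.subtypeSubtypeEquivSubtypeInter p (f · = b)),
      Fintype.card_congr (Equiv.subtypeSubtypeEquivSubtypeInter q (f · = b)),
      Fintype.card_subtype, Fintype.card_subtype, hcard b]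
  exact ⟨Equiv.ofFiberEquiv hfiber, Equiv.ofFiberEquiv_map hfiber⟩

end FiberMatching

lemma Finset.sum_neg_one_pow_eq_card_sub_card {ι : Type*} (s : Finset ι) (g : ι → ℕ) :
    ∑ i ∈ s, (-1 : ℤ) ^ g i = #{i ∈ s | Even (g i)} - #{i ∈ s | Odd (g i)} := by
  have hnot_even : {i ∈ s | ¬Even (g i)} = {i ∈ s | Odd (g i)} := by
    simp only [Nat.not_even_iff_odd]
  have heven : ∀ i ∈ {i ∈ s | Even (g i)}, (-1 : ℤ) ^ g i = 1 :=
    fun i hi => (mem_filter.mp hi).2.neg_one_pow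
  have hodd : ∀ i ∈ {i ∈ s | Odd (g i)}, (-1 : ℤ) ^ g i = -1 :=
    fun i hi => (mem_filter.mp hi).2.neg_one_pow
  rw [← sum_filter_add_sum_filter_not s (fun i => Even (g i)), hnot_even, sum_congr rfl heven,
    sum_congr rfl hodd]
  simp [sub_eq_add_neg]

lemma bdry_single_apply (R : Type*) [Ring R] {n : ℕ} {X : Type*} [TopologicalSpace X]
    [DecidableEq (SingularSimplex n X)] (σ : SingularSimplex (n + 1) X) (r : R)
    (τ : SingularSimplex n X) :
    bdry R X (Finsupp.single σ r) τ = ∑ j with sface j σ = τ, (-1 : R) ^ (j : ℕ) * r := by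
  simp +contextual [bdry, Finsupp.single_apply, sum_filter]

theorem stmt1 (X : Type*) [TopologicalSpace X] (n : ℕ) (σ : SingularSimplex (n + 1) X)
    (h : bdry ℤ X (Finsupp.single σ 1) = 0) :
    ∃ π : Fin (n + 2) → Fin (n + 2), IsMatching n π ∧
      ∀ j : Fin (n + 2), Even (j : ℕ) → sface j σ = sface (π j) σ := by
  classical
  have hcard (τ : SingularSimplex n X) :
      #{j : Fin (n + 2) | Even (j : ℕ) ∧ sface j σ = τ} =
        #{j : Fin (n + 2) | Odd (j : ℕ) ∧ sface j σ = τ} := by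
    have hτ := DFunLike.congr_fun h τ
    rw [bdry_single_apply, Finsupp.zero_apply] at hτ
    simp only [mul_one, sum_neg_one_pow_eq_card_sub_card, filter_filter, sub_eq_zero,
      Nat.cast_inj] at hτ
    simpa only [and_comm] using hτ
  obtain ⟨e, he⟩ := exists_subtypeEquiv_comp_eq (fun j => sface j σ) hcard
  refine ⟨_, e.bijOn_extend_subtype, fun j hj => ?_⟩
  simp only [dif_pos hj, he]
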